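/- Let 2 ≤ y ≤ N and let n ≤ N be an integer all of whose prime factors are at most y. For any parameter 1 ≤ L₀ ≤ N with n > L₀, there exist positive integers ℓ and m with n = ℓm, L₀ < ℓ ≤ P(ℓ)·L₀, and p(m) ≥ P(ℓ), where P(ℓ) is the largest prime factor of ℓ and p(m) is the smallest prime factor of m (with the convention p(1) = +∞). -/
import Mathlib

theorem smooth_factorization_aux (n : ℕ) : ∀ L₀ : ℕ, 1 ≤ L₀ → L₀ < n →
    ∃ ℓ m : ℕ, 0 < ℓ ∧ 0 < m ∧ n = ℓ * m ∧ L₀ < ℓ ∧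
      ℓ ≤ (ℓ.primeFactors.sup id) * L₀ ∧
      (m = 1 ∨ ℓ.primeFactors.sup id ≤ m.minFac) := by
  induction n using Nat.strong_induction_on with
  | _ n ih =>
    intro L₀ hL₀ hn
    have hn2 : 2 ≤ n := by omega
    have hne : n.primeFactors.Nonempty := Nat.nonempty_primeFactors.mpr (by omega)
    obtain ⟨P, hPmem, hPsup⟩ := Finset.exists_mem_eq_sup _ hne id
    simp only [id] at hPsup
    have hPprime : P.Prime := Nat.prime_of_mem_primeFactors hPmem
    have hP2 : 2 ≤ P := hPprime.two_le
    obtain ⟨n', hn'⟩ := Nat.dvd_of_mem_primeFactors hPmem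
    have hn'pos : 0 < n' := by
      rcases Nat.eq_zero_or_pos n' with rfl | h
      · simp at hn'; omega
      · exact h
    by_cases h : n' ≤ L₀
    · refine ⟨n, 1, by omega, one_pos, (mul_one n).symm, hn, ?_, Or.inl rfl⟩
      calc n = P * n' := hn'
        _ ≤ P * L₀ := Nat.mul_le_mul_left _ h
        _ = n.primeFactors.sup id * L₀ := by rw [hPsup]
    · have hn'lt : n' < n := by nlinarith
      obtain ⟨ℓ, m', hℓ, hm', heq, hLℓ, hbound, hmin⟩ := ih n' hn'lt L₀ hL₀ (by omega)
      refine ⟨ℓ, m' * P, hℓ, by positivity, by rw [hn', heq]; ring, hLℓ, hbound, Or.inr ?_⟩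
      have hℓdvdn : ℓ ∣ n := ⟨m' * P, by rw [hn', heq]; ring⟩
      have hsub : ℓ.primeFactors ⊆ n.primeFactors :=
        Nat.primeFactors_mono hℓdvdn (by omega)
      have hℓP : ℓ.primeFactors.sup id ≤ P := by
        calc ℓ.primeFactors.sup id ≤ n.primeFactors.sup id := Finset.sup_mono hsub
          _ = P := hPsup
      have hmP1 : m' * P ≠ 1 := by nlinarith
      have hq : (m' * P).minFac.Prime := Nat.minFac_prime hmP1
      rcases (Nat.Prime.dvd_mul hq).mp (Nat.minFac_dvd _) with h1 | h2
      · rcases hmin with rfl | hmin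
        · exact absurd (Nat.le_of_dvd one_pos h1) (by have := hq.two_le; omega)
        · exact le_trans hmin (Nat.minFac_le_of_dvd hq.two_le h1)
      · have : (m' * P).minFac = P := (Nat.prime_dvd_prime_iff_eq hq hPprime).mp h2
        omega

/-- Any `y`-smooth `n ≤ N` with `n > L₀` factors as `n = ℓm` with
`L₀ < ℓ ≤ P(ℓ)·L₀` and `p(m) ≥ P(ℓ)` (with the convention that `m = 1` corresponds to
`p(m) = +∞`), where `P(ℓ)` is the largest prime factor of `ℓ` and `p(m)` is the smallest
prime factor of `m`. -/
theorem smooth_factorization (N y n L₀ : ℕ) (hy2 : 2 ≤ y) (hyN : y ≤ N) (hnN : n ≤ N)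
    (hsmooth : ∀ q ∈ n.primeFactors, q ≤ y) (hL₀ : 1 ≤ L₀) (hL₀N : L₀ ≤ N)
    (hn : L₀ < n) :
    ∃ ℓ m : ℕ, 0 < ℓ ∧ 0 < m ∧ n = ℓ * m ∧ L₀ < ℓ ∧
      ℓ ≤ (ℓ.primeFactors.sup id) * L₀ ∧
      (m = 1 ∨ ℓ.primeFactors.sup id ≤ m.minFac) := by
  exact smooth_factorization_aux n L₀ hL₀ hn
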